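/- Consider the presentation ⟨a, b, c | [a,b]·c⁻¹, c⟩ of ℤ². For every n ≥ 1, the word [aⁿ, bⁿ] lies in the normal closure of the relators in the free group on {a,b,c}, and its area with respect to this presentation is at least n². Hence the Dehn function of ℤ² is at least quadratic. -/

import Mathlib

/-- Generators for the presentation `⟨a, b, c | [a,b]·c⁻¹, c⟩` of `ℤ²`. -/
inductive Letter : Type
  | a | b | c
  deriving DecidableEq

/-- The free group on `{a, b, c}`. -/
abbrev F : Type := FreeGroup Letter

def a : F := FreeGroup.of Letter.a
def b : F := FreeGroup.of Letter.b
def c : F := FreeGroup.of Letter.c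

/-- The commutator convention `[x, y] = x⁻¹ y⁻¹ x y`. -/
def cmm (x y : F) : F := x⁻¹ * y⁻¹ * x * y

/-- The relator set `{[a,b]·c⁻¹, c}` presenting `ℤ²`. -/
def R : Set F := {cmm a b * c⁻¹, c}

/-- `w` freely equals a product of `N` conjugates of elements of `R^±1`. -/
def IsConjProd (S : Set F) (N : ℕ) (w : F) : Prop :=
  ∃ (u r : Fin N → F) (ε : Fin N → ℤ),
    (∀ i, r i ∈ S) ∧ (∀ i, ε i = 1 ∨ ε i = -1) ∧
    w = (List.ofFn fun i => u i * r i ^ ε i * (u i)⁻¹).prod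

/-- `Area(w)`. -/
noncomputable def area (S : Set F) (w : F) : ℕ := sInf {N : ℕ | IsConjProd S N w}

/-! ### The integral Heisenberg group -/

@[ext] structure Heis where
  x : ℤ
  y : ℤ
  z : ℤ

namespace Heis

instance : One Heis := ⟨⟨0, 0, 0⟩⟩
instance : Mul Heis := ⟨fun g h => ⟨g.x + h.x, g.y + h.y, g.z + h.z + g.x * h.y⟩⟩
instance : Inv Heis := ⟨fun g => ⟨-g.x, -g.y, -g.z + g.x * g.y⟩⟩

@[simp] lemma one_x : (1 : Heis).x = 0 := rfl
@[simp] lemma one_y : (1 : Heis).y = 0 := rfl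
@[simp] lemma one_z : (1 : Heis).z = 0 := rfl
@[simp] lemma mul_x (g h : Heis) : (g * h).x = g.x + h.x := rfl
@[simp] lemma mul_y (g h : Heis) : (g * h).y = g.y + h.y := rfl
@[simp] lemma mul_z (g h : Heis) : (g * h).z = g.z + h.z + g.x * h.y := rfl
@[simp] lemma inv_x (g : Heis) : g⁻¹.x = -g.x := rfl
@[simp] lemma inv_y (g : Heis) : g⁻¹.y = -g.y := rfl
@[simp] lemma inv_z (g : Heis) : g⁻¹.z = -g.z + g.x * g.y := rfl

instance : Group Heis where
  mul_assoc g h k := by ext <;> simp <;> ring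
  one_mul g := by ext <;> simp
  mul_one g := by ext <;> simp
  inv_mul_cancel g := by ext <;> simp

end Heis

/-- The homomorphism from the free group to the Heisenberg group. -/
def φ : F →* Heis :=
  FreeGroup.lift fun l => match l with
    | Letter.a => ⟨1, 0, 0⟩
    | Letter.b => ⟨0, 1, 0⟩
    | Letter.c => ⟨0, 0, 1⟩

@[simp] lemma φ_a : φ a = ⟨1, 0, 0⟩ := FreeGroup.lift_apply_of
@[simp] lemma φ_b : φ b = ⟨0, 1, 0⟩ := FreeGroup.lift_apply_of
@[simp] lemma φ_c : φ c = ⟨0, 0, 1⟩ := FreeGroup.lift_apply_of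

lemma pow_a (n : ℕ) : (⟨1, 0, 0⟩ : Heis) ^ n = ⟨n, 0, 0⟩ := by
  induction n with
  | zero => rfl
  | succ k ih => rw [pow_succ, ih]; ext <;> simp

lemma pow_b (n : ℕ) : (⟨0, 1, 0⟩ : Heis) ^ n = ⟨0, n, 0⟩ := by
  induction n with
  | zero => rfl
  | succ k ih => rw [pow_succ, ih]; ext <;> simp

lemma φ_cmm (n : ℕ) : φ (cmm (a ^ n) (b ^ n)) = ⟨0, 0, (n : ℤ) ^ 2⟩ := by
  simp only [cmm, map_mul, map_inv, map_pow, φ_a, φ_b, pow_a, pow_b]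
  ext <;> simp <;> ring

/-- Products of central elements `⟨0,0,t⟩`, `|t| ≤ 1`, have small `z`. -/
lemma prod_central (L : List Heis) (h : ∀ g ∈ L, g.x = 0 ∧ g.y = 0 ∧ |g.z| ≤ 1) :
    L.prod.x = 0 ∧ L.prod.y = 0 ∧ |L.prod.z| ≤ (L.length : ℤ) := by
  induction L with
  | nil => simp
  | cons g L ih =>
    obtain ⟨hx, hy, hz⟩ := h g (List.mem_cons_self)
    obtain ⟨ihx, ihy, ihz⟩ := ih fun g hg => h g (List.mem_cons_of_mem _ hg)
    refine ⟨by simp [hx, ihx], by simp [hy, ihy], ?_⟩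
    simp only [List.prod_cons, Heis.mul_z, hx, zero_mul, add_zero, List.length_cons]
    calc |g.z + L.prod.z| ≤ |g.z| + |L.prod.z| := abs_add_le _ _
      _ ≤ 1 + L.length := add_le_add hz ihz
      _ = ((L.length : ℤ) + 1) := by ring
      _ = ((L.length + 1 : ℕ) : ℤ) := by push_cast; ring

/-- Image under `φ` of a conjugate of a relator power. -/
lemma φ_conj (u r : F) (ε : ℤ) (hr : r ∈ R) (hε : ε = 1 ∨ ε = -1) :
    (φ (u * r ^ ε * u⁻¹)).x = 0 ∧ (φ (u * r ^ ε * u⁻¹)).y = 0 ∧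
      |(φ (u * r ^ ε * u⁻¹)).z| ≤ 1 := by
  have hφr : φ r = 1 ∨ φ r = ⟨0, 0, 1⟩ := by
    rcases hr with h | h
    · left
      rw [h]
      simp only [cmm, map_mul, map_inv, φ_a, φ_b, φ_c]
      ext <;> simp
    · right; rw [Set.mem_singleton_iff.mp h, φ_c]
  have key : ∃ t : ℤ, |t| ≤ 1 ∧ φ (r ^ ε) = ⟨0, 0, t⟩ := by
    rcases hφr with h | h
    · refine ⟨0, by norm_num, ?_⟩
      rw [map_zpow, h, one_zpow]
      rfl
    · rcases hε with hε | hε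
      · exact ⟨1, by norm_num, by rw [map_zpow, h, hε, zpow_one]⟩
      · refine ⟨-1, by norm_num, ?_⟩
        rw [map_zpow, h, hε, zpow_neg_one]
        ext <;> simp
  obtain ⟨t, ht, hφ⟩ := key
  rw [map_mul, map_mul, map_inv, hφ]
  have hc : φ u * (⟨0, 0, t⟩ : Heis) * (φ u)⁻¹ = ⟨0, 0, t⟩ := by
    ext <;> simp <;> ring
  rw [hc]
  exact ⟨rfl, rfl, ht⟩

open scoped commutatorElement

lemma cmm_eq_commutator (x y : F) : cmm x y = ⁅x⁻¹, y⁻¹⁆ := by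
  simp [cmm, commutatorElement_def]

/-- Example 2.3: with respect to the presentation `⟨a,b,c | [a,b]·c⁻¹, c⟩` of `ℤ²`, the
word `[aⁿ, bⁿ]` represents the identity and has area at least `n²`.  Hence the Dehn
function of `ℤ²` is at least quadratic. -/
theorem Z2_quadratic_lower_bound :
    ∀ n : ℕ, 1 ≤ n →
      cmm (a ^ n) (b ^ n) ∈ Subgroup.normalClosure R ∧
      n ^ 2 ≤ area R (cmm (a ^ n) (b ^ n)) := by
  intro n _hn
  set w := cmm (a ^ n) (b ^ n) with hw
  -- membership in the normal closure
  have hmem : w ∈ Subgroup.normalClosure R := by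
    set N := Subgroup.normalClosure R with hN
    have h1 : cmm a b * c⁻¹ ∈ N := Subgroup.subset_normalClosure (Set.mem_insert _ _)
    have h2 : c ∈ N := Subgroup.subset_normalClosure (Set.mem_insert_of_mem _ rfl)
    have hab : cmm a b ∈ N := by simpa using mul_mem h1 h2
    set π := QuotientGroup.mk' N with hπ
    have hab' : π (cmm a b) = 1 := (QuotientGroup.eq_one_iff _).mpr hab
    refine (QuotientGroup.eq_one_iff w).mp ?_
    have hcomm : Commute (π a) (π b) := by
      have h : ⁅(π a)⁻¹, (π b)⁻¹⁆ = 1 := by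
        rw [cmm_eq_commutator] at hab'
        simpa [map_commutatorElement] using hab'
      have := commutatorElement_eq_one_iff_commute.mp h
      simpa using (this.inv_inv)
    have hpw : π w = ⁅(π (a ^ n))⁻¹, (π (b ^ n))⁻¹⁆ := by
      rw [hw, cmm_eq_commutator, map_commutatorElement, map_inv, map_inv]
    show π w = 1
    rw [hpw, commutatorElement_eq_one_iff_commute, map_pow, map_pow]
    exact ((hcomm.pow_pow n n).inv_left.inv_right)
  refine ⟨hmem, ?_⟩
  -- nonemptiness: extract an explicit product of conjugates
  have hexists : ∃ N, IsConjProd R N w := by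
    have h2 : w ∈ Submonoid.closure
        (Group.conjugatesOfSet R ∪ (Group.conjugatesOfSet R)⁻¹) := by
      rw [← Subgroup.closure_toSubmonoid]
      exact hmem
    obtain ⟨l, hl, hprod⟩ := Submonoid.exists_list_of_mem_closure h2
    have hchoice : ∀ i : Fin l.length, ∃ u r, ∃ ε : ℤ, r ∈ R ∧ (ε = 1 ∨ ε = -1) ∧
        u * r ^ ε * u⁻¹ = l.get i := by
      intro i
      rcases hl (l.get i) (l.get_mem ..) with hy | hy
      · obtain ⟨r, hr, hconj⟩ := Group.mem_conjugatesOfSet_iff.mp hy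
        obtain ⟨u, hu⟩ := isConj_iff.mp hconj
        exact ⟨u, r, 1, hr, Or.inl rfl, by rw [zpow_one]; exact hu⟩
      · obtain ⟨r, hr, hconj⟩ := Group.mem_conjugatesOfSet_iff.mp (Set.mem_inv.mp hy)
        obtain ⟨u, hu⟩ := isConj_iff.mp hconj
        refine ⟨u, r, -1, hr, Or.inr rfl, ?_⟩
        rw [show ((-1 : ℤ)) = -1 from rfl, zpow_neg_one,
          show u * r⁻¹ * u⁻¹ = (u * r * u⁻¹)⁻¹ by group, hu, inv_inv]
    choose u r ε hR hε hEq using hchoice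
    refine ⟨l.length, u, r, ε, hR, hε, ?_⟩
    have : (List.ofFn fun i => u i * r i ^ ε i * (u i)⁻¹) = List.ofFn l.get := by
      congr 1
      funext i
      exact hEq i
    rw [this, List.ofFn_get, hprod]
  -- the lower bound: every N with IsConjProd R N w satisfies n² ≤ N
  refine le_csInf hexists ?_
  rintro N ⟨u, r, ε, hR, hε, hprod⟩
  have hφw : φ w = ⟨0, 0, (n : ℤ) ^ 2⟩ := φ_cmm n
  have hmap : φ w = (List.ofFn fun i => φ (u i * r i ^ ε i * (u i)⁻¹)).prod := by
    rw [hprod, map_list_prod]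
    congr 1
    rw [List.map_ofFn]
    rfl
  have hcentral := prod_central (List.ofFn fun i => φ (u i * r i ^ ε i * (u i)⁻¹)) ?_
  · obtain ⟨-, -, hz⟩ := hcentral
    rw [← hmap, hφw, List.length_ofFn] at hz
    have : ((n : ℤ) ^ 2) ≤ (N : ℤ) := by
      have h0 : (0 : ℤ) ≤ (n : ℤ) ^ 2 := sq_nonneg _
      calc ((n : ℤ) ^ 2) = |(Heis.mk 0 0 ((n : ℤ) ^ 2)).z| := by simp [abs_of_nonneg h0]
        _ ≤ (N : ℤ) := hz
    exact_mod_cast this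
  · intro g hg
    rw [List.mem_ofFn] at hg
    obtain ⟨i, rfl⟩ := hg
    exact φ_conj (u i) (r i) (ε i) (hR i) (hε i)
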